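/- The following are equivalent for F: X → 2^Y with X, Y finite nonempty: (i) F satisfies the Hall condition; (ii) F admits a Hall partition; (iii) F admits an injective selection. -/
import Mathlib


open Finset
open scoped Classical
set_option linter.unusedSectionVars false

variable {α β : Type*}

section Defs
variable [DecidableEq α] [DecidableEq β]

/-- Image of a set under a set-valued mapping. -/
def im (F : α → Finset β) (W : Finset α) : Finset β := W.biUnion F

/-- Complement mapping `F_W : x ↦ F(x) \\ F(W)`. -/
def cmap (F : α → Finset β) (W : Finset α) : α → Finset β := fun x => F x \ im F W

/-- Hall condition of a set-valued mapping on a domain `D`. -/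
def HallOn (F : α → Finset β) (D : Finset α) : Prop := ∀ W ⊆ D, W.card ≤ (im F W).card

/-- A critical set: nonempty with `♯F(W) = ♯W`. -/
def Critical (F : α → Finset β) (W : Finset α) : Prop := W.Nonempty ∧ (im F W).card = W.card

/-- A non-reducible set: nonempty with no proper critical subset. -/
def NonReducible (F : α → Finset β) (W : Finset α) : Prop :=
  W.Nonempty ∧ ∀ V, V ⊂ W → ¬ Critical F V

/-- Union of the first `i` parts: `⋃_{j<i} W_j`. -/
def pre {m : ℕ} (W : Fin m → Finset α) (i : Fin m) : Finset α :=
  (Finset.univ.filter (fun j => j.val < i.val)).biUnion W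

/-- Hall partition of `F` on the whole domain. -/
def IsHallPartition [Fintype α] (F : α → Finset β) {m : ℕ} (W : Fin m → Finset α) : Prop :=
  (∀ i j, i ≠ j → Disjoint (W i) (W j)) ∧
  (Finset.univ.biUnion W = Finset.univ) ∧
  (∀ i, ∀ x ∈ W i, (cmap F (pre W i) x).Nonempty) ∧
  (∀ i, NonReducible (cmap F (pre W i)) (W i)) ∧
  (∀ i : Fin m, i.val < m - 1 → Critical (cmap F (pre W i)) (W i))

/-- The alldifferent kernel `F^*`. -/
noncomputable def kernel [Fintype α] (F : α → Finset β) : α → Finset β :=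
  fun x => (F x).filter (fun y => ∃ s : α → β, Function.Injective s ∧ (∀ z, s z ∈ F z) ∧ s x = y)

lemma im_mono {F : α → Finset β} {A B : Finset α} (h : A ⊆ B) : im F A ⊆ im F B :=
  Finset.biUnion_subset_biUnion_of_subset_left _ h

lemma im_union {F : α → Finset β} {A B : Finset α} : im F (A ∪ B) = im F A ∪ im F B := by
  ext y
  simp only [im, mem_biUnion, mem_union]
  constructor
  · rintro ⟨x, hx | hx, hy⟩
    · exact Or.inl ⟨x, hx, hy⟩
    · exact Or.inr ⟨x, hx, hy⟩
  · rintro (⟨x, hx, hy⟩ | ⟨x, hx, hy⟩)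
    · exact ⟨x, Or.inl hx, hy⟩
    · exact ⟨x, Or.inr hx, hy⟩

lemma cmap_empty (F : α → Finset β) : cmap F ∅ = F := by
  funext x; simp [cmap, im]

lemma im_cmap {F : α → Finset β} {C U : Finset α} :
    im (cmap F C) U = im F U \ im F C := by
  ext y; simp only [im, cmap, mem_biUnion, mem_sdiff]
  constructor
  · rintro ⟨x, hx, hy, hn⟩; exact ⟨⟨x, hx, hy⟩, hn⟩
  · rintro ⟨⟨x, hx, hy⟩, hn⟩; exact ⟨x, hx, hy, hn⟩

lemma cmap_cmap {F : α → Finset β} {C Q : Finset α} :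
    cmap (cmap F C) Q = cmap F (C ∪ Q) := by
  funext x
  simp only [cmap, im_cmap, im_union]
  ext y; simp only [mem_sdiff, mem_union]; tauto

/-- Non-reducible with nonempty images implies Hall. -/
lemma nonReducible_hall {F : α → Finset β} {W : Finset α}
    (hnr : NonReducible F W) (hne : ∀ x ∈ W, (F x).Nonempty) : HallOn F W := by
  by_contra h
  simp only [HallOn, not_forall, not_le] at h
  obtain ⟨V0, hV0W, hV0⟩ := h
  obtain ⟨V, hV, hmin⟩ := Finset.exists_min_image
    (W.powerset.filter (fun V => (im F V).card < V.card)) Finset.card ⟨V0, by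
      simp only [mem_filter, mem_powerset]; exact ⟨hV0W, hV0⟩⟩
  simp only [mem_filter, mem_powerset] at hV
  obtain ⟨hVW, hVc⟩ := hV
  have hVne : V.Nonempty := by
    rcases V.eq_empty_or_nonempty with rfl | h
    · simp [im] at hVc
    · exact h
  obtain ⟨x, hx⟩ := hVne
  have h1 : V.card ≥ 1 := Finset.card_pos.2 ⟨x, hx⟩
  rcases eq_or_lt_of_le h1 with h1 | h1
  · -- V is a singleton
    have : V = {x} := by
      apply Finset.eq_singleton_iff_unique_mem.2
      refine ⟨hx, fun y hy => ?_⟩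
      exact Finset.card_le_one.1 (le_of_eq h1.symm) y hy x hx
    subst this
    have := hne x (hVW hx)
    have : (im F {x}).card ≥ 1 := by
      simpa [im] using Finset.card_pos.2 (by simpa [im] using this)
    omega
  · -- card V ≥ 2
    set V' := V.erase x with hV'
    have hV'ss : V' ⊂ V := Finset.erase_ssubset hx
    have hV'card : V'.card = V.card - 1 := Finset.card_erase_of_mem hx
    have hV'ne : V'.Nonempty := by
      rw [← Finset.card_pos, hV'card]; omega
    have hV'hall : V'.card ≤ (im F V').card := by
      by_contra hc
      have := hmin V' (by
        simp only [mem_filter, mem_powerset]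
        exact ⟨hV'ss.subset.trans hVW, by omega⟩)
      have := Finset.card_lt_card hV'ss
      omega
    have him : (im F V').card ≤ (im F V).card :=
      Finset.card_le_card (im_mono hV'ss.subset)
    have hcrit : Critical F V' := ⟨hV'ne, by omega⟩
    exact hnr.2 V' (lt_of_lt_of_le hV'ss hVW) hcrit

/-- If C ⊆ D critical and Hall on D, then the complement map is Hall on D \ C. -/
lemma hall_cmap {F : α → Finset β} {D C : Finset α} (hC : C ⊆ D)
    (hcrit : (im F C).card = C.card) (hall : HallOn F D) :
    HallOn (cmap F C) (D \ C) := by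
  intro U hU
  have hUD : U ⊆ D := hU.trans (Finset.sdiff_subset)
  have hdisj : Disjoint U C := by
    refine Finset.disjoint_left.2 fun x hx hxC => ?_
    exact (Finset.mem_sdiff.1 (hU hx)).2 hxC
  have h1 : (U ∪ C).card = U.card + C.card := Finset.card_union_of_disjoint hdisj
  have h2 : (U ∪ C).card ≤ (im F (U ∪ C)).card :=
    hall _ (Finset.union_subset hUD hC)
  rw [im_cmap]
  have h3 : (im F (U ∪ C)).card ≤ (im F U \ im F C).card + (im F C).card := by
    rw [im_union]
    calc (im F U ∪ im F C).card = (im F U \ im F C ∪ im F C).card := by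
          rw [Finset.sdiff_union_self_eq_union]
      _ ≤ (im F U \ im F C).card + (im F C).card := Finset.card_union_le _ _
  omega

/-- Hall on a finset gives an injective selection on it. -/
lemma hall_selection {F : α → Finset β} {D : Finset α} (hall : HallOn F D) :
    ∃ s : {x // x ∈ D} → β, Function.Injective s ∧ ∀ x : {x // x ∈ D}, s x ∈ F x.1 := by
  apply (Finset.all_card_le_biUnion_card_iff_exists_injective (fun x : {x // x ∈ D} => F x.1)).1
  intro s
  have : s.card = (s.image (fun x => x.1)).card :=
    (Finset.card_image_of_injective s Subtype.val_injective).symm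
  rw [this]
  have hsub : (s.image (fun x => x.1)) ⊆ D := by
    intro x hx
    simp only [mem_image] at hx
    obtain ⟨y, _, rfl⟩ := hx
    exact y.2
  have := hall _ hsub
  refine this.trans (Finset.card_le_card ?_)
  intro y hy
  simp only [im, mem_biUnion, mem_image] at hy ⊢
  obtain ⟨x, ⟨z, hz, rfl⟩, hy⟩ := hy
  exact ⟨z, hz, hy⟩



/-- Union of a list of finsets. -/
def unionList (L : List (Finset α)) : Finset α := L.foldr (· ∪ ·) ∅

lemma mem_unionList {L : List (Finset α)} {y : α} :
    y ∈ unionList L ↔ ∃ A ∈ L, y ∈ A := by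
  induction L with
  | nil => simp [unionList]
  | cons C L ih => simp [unionList, mem_union, ih.symm]

/-- A Hall chain covering `D`. -/
def chainOn (F : α → Finset β) (D : Finset α) : List (Finset α) → Prop
  | [] => D = ∅
  | C :: L => C ⊆ D ∧ NonReducible F C ∧ (∀ x ∈ C, (F x).Nonempty) ∧
      (L ≠ [] → Critical F C) ∧ chainOn (cmap F C) (D \ C) L

lemma im_singleton {F : α → Finset β} {x : α} : im F {x} = F x := by simp [im]

lemma hall_nonempty_im {F : α → Finset β} {D : Finset α} (hall : HallOn F D)
    {x : α} (hx : x ∈ D) : (F x).Nonempty := by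
  have := hall {x} (by simpa using hx)
  rw [im_singleton] at this
  simp only [card_singleton] at this
  exact Finset.card_pos.1 (by omega)

lemma exists_chain : ∀ (n : ℕ) (F : α → Finset β) (D : Finset α), D.card ≤ n →
    HallOn F D → ∃ L, chainOn F D L := by
  intro n
  induction n with
  | zero =>
    intro F D hcard _
    exact ⟨[], Finset.card_eq_zero.1 (by omega)⟩
  | succ n ih =>
    intro F D hcard hall
    rcases D.eq_empty_or_nonempty with rfl | hDne
    · exact ⟨[], rfl⟩
    by_cases hS : (D.powerset.filter (fun C => Critical F C)).Nonempty
    · obtain ⟨C, hC, hmin⟩ := Finset.exists_min_image _ Finset.card hS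
      simp only [mem_filter, mem_powerset] at hC
      obtain ⟨hCD, hCcrit⟩ := hC
      have hCne : C.Nonempty := hCcrit.1
      have hnr : NonReducible F C := by
        refine ⟨hCne, fun V hV hVc => ?_⟩
        have := hmin V (by
          simp only [mem_filter, mem_powerset]
          exact ⟨hV.subset.trans hCD, hVc⟩)
        have := Finset.card_lt_card hV
        omega
      have hall' : HallOn (cmap F C) (D \ C) := hall_cmap hCD hCcrit.2 hall
      have hcards : (D \ C).card ≤ n := by
        have h1 : (D \ C).card = D.card - C.card := Finset.card_sdiff_of_subset hCD
        have h2 : 1 ≤ C.card := Finset.card_pos.2 hCne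
        omega
      obtain ⟨L, hL⟩ := ih (cmap F C) (D \ C) hcards hall'
      exact ⟨C :: L, hCD, hnr, fun x hx => hall_nonempty_im hall (hCD hx),
        fun _ => hCcrit, hL⟩
    · have hnr : NonReducible F D := by
        refine ⟨hDne, fun V hV hVc => ?_⟩
        exact hS ⟨V, by simp only [mem_filter, mem_powerset]; exact ⟨hV.subset, hVc⟩⟩
      refine ⟨[D], Finset.Subset.refl D, hnr,
        fun x hx => hall_nonempty_im hall hx, by simp, by simp [chainOn]⟩

lemma chain_subset : ∀ (L : List (Finset α)) (F : α → Finset β) (D : Finset α),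
    chainOn F D L → ∀ A ∈ L, A ⊆ D := by
  intro L
  induction L with
  | nil => intro F D _ A hA; simp at hA
  | cons C L ih =>
    intro F D hc A hA
    rcases List.mem_cons.1 hA with rfl | hA
    · exact hc.1
    · exact (ih _ _ hc.2.2.2.2 A hA).trans (Finset.sdiff_subset)

lemma chain_union : ∀ (L : List (Finset α)) (F : α → Finset β) (D : Finset α),
    chainOn F D L → unionList L = D := by
  intro L
  induction L with
  | nil => intro F D hc; simp only [unionList, List.foldr_nil]; exact hc.symm
  | cons C L ih =>
    intro F D hc
    have : unionList (C :: L) = C ∪ unionList L := rfl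
    rw [this, ih _ _ hc.2.2.2.2, Finset.union_sdiff_of_subset hc.1]

lemma chain_pairwise : ∀ (L : List (Finset α)) (F : α → Finset β) (D : Finset α),
    chainOn F D L → List.Pairwise Disjoint L := by
  intro L
  induction L with
  | nil => intro _ _ _; exact List.Pairwise.nil
  | cons C L ih =>
    intro F D hc
    refine List.Pairwise.cons (fun A hA => ?_) (ih _ _ hc.2.2.2.2)
    have hsub := chain_subset L _ _ hc.2.2.2.2 A hA
    exact Finset.disjoint_left.2 fun x hxC hxA =>
      (Finset.mem_sdiff.1 (hsub hxA)).2 hxC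

lemma chain_main : ∀ (L : List (Finset α)) (F : α → Finset β) (D : Finset α),
    chainOn F D L → ∀ (i : ℕ) (hi : i < L.length),
    NonReducible (cmap F (unionList (L.take i))) (L.get ⟨i, hi⟩) ∧
    (∀ x ∈ L.get ⟨i, hi⟩, (cmap F (unionList (L.take i)) x).Nonempty) ∧
    (i < L.length - 1 → Critical (cmap F (unionList (L.take i))) (L.get ⟨i, hi⟩)) := by
  intro L
  induction L with
  | nil => intro F D _ i hi; simp at hi
  | cons C L ih =>
    intro F D hc i hi
    obtain ⟨hCD, hnr, hne, hcrit, htail⟩ := hc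
    match i with
    | 0 =>
      have he : unionList ((C :: L).take 0) = ∅ := rfl
      rw [he, cmap_empty]
      refine ⟨hnr, hne, fun h0 => ?_⟩
      apply hcrit
      intro hnil
      subst hnil
      simp at h0
    | (j+1) =>
      have hj : j < L.length := by simpa using hi
      have hu : unionList ((C :: L).take (j+1)) = C ∪ unionList (L.take j) := rfl
      have hcm : cmap F (C ∪ unionList (L.take j)) =
          cmap (cmap F C) (unionList (L.take j)) := cmap_cmap.symm
      have hget : (C :: L).get ⟨j+1, hi⟩ = L.get ⟨j, hj⟩ := rfl
      rw [hu, hcm, hget]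
      have := ih (cmap F C) (D \ C) htail j hj
      refine ⟨this.1, this.2.1, fun hlt => this.2.2 ?_⟩
      simp only [List.length_cons] at hlt
      omega


lemma selection_hall [Fintype α] {F : α → Finset β} {s : α → β}
    (hinj : Function.Injective s) (hmem : ∀ x, s x ∈ F x) : HallOn F Finset.univ := by
  intro W _
  have h1 : W.card = (W.image s).card := (Finset.card_image_of_injective W hinj).symm
  rw [h1]
  apply Finset.card_le_card
  intro y hy
  simp only [mem_image] at hy
  obtain ⟨x, hx, rfl⟩ := hy
  exact Finset.mem_biUnion.2 ⟨x, hx, hmem x⟩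

lemma partition_selection [Fintype α] {F : α → Finset β} {m : ℕ} {W : Fin m → Finset α}
    (hp : IsHallPartition F W) :
    ∃ s : α → β, Function.Injective s ∧ ∀ x, s x ∈ F x := by
  obtain ⟨hdisj, huniv, hne, hnr, hcrit⟩ := hp
  have hall : ∀ i, HallOn (cmap F (pre W i)) (W i) :=
    fun i => nonReducible_hall (hnr i) (hne i)
  have hsel := fun i => hall_selection (hall i)
  choose t ht1 ht2 using hsel
  have hex : ∀ x : α, ∃ i, x ∈ W i := by
    intro x
    have : x ∈ Finset.univ.biUnion W := huniv ▸ Finset.mem_univ x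
    obtain ⟨i, _, hi⟩ := Finset.mem_biUnion.1 this
    exact ⟨i, hi⟩
  set idx : α → Fin m := fun x => Classical.choose (hex x) with hidx
  have hmemidx : ∀ x, x ∈ W (idx x) := fun x => Classical.choose_spec (hex x)
  set s : α → β := fun x => t (idx x) ⟨x, hmemidx x⟩ with hs
  -- key: selections from different parts take different values
  have hkey : ∀ (i j : Fin m), i.val < j.val → ∀ (a : {x // x ∈ W i}) (b : {x // x ∈ W j}),
      t i a ≠ t j b := by
    intro i j hij a b heq
    have hb : t j b ∈ cmap F (pre W j) b.1 := ht2 j b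
    have hbn : t j b ∉ im F (pre W j) := (Finset.mem_sdiff.1 hb).2
    have ha : t i a ∈ cmap F (pre W i) a.1 := ht2 i a
    have haF : t i a ∈ F a.1 := (Finset.mem_sdiff.1 ha).1
    have hapre : a.1 ∈ pre W j := by
      apply Finset.mem_biUnion.2
      refine ⟨i, ?_, a.2⟩
      simp only [Finset.mem_filter, Finset.mem_univ, true_and]
      exact hij
    have : t i a ∈ im F (pre W j) := Finset.mem_biUnion.2 ⟨a.1, hapre, haF⟩
    rw [heq] at this
    exact hbn this
  refine ⟨s, ?_, ?_⟩
  · intro x y hxy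
    by_cases h : idx x = idx y
    · have : t (idx x) ⟨x, hmemidx x⟩ = t (idx x) ⟨y, h ▸ hmemidx y⟩ := by
        simp only [hs] at hxy
        rw [hxy]
        congr 1
        · exact h.symm
        · exact (Subtype.heq_iff_coe_eq (by rw [h]; intro z; rfl)).2 rfl
      have := ht1 (idx x) this
      exact congrArg Subtype.val this
    · exfalso
      have hne' : (idx x).val ≠ (idx y).val := fun hc => h (Fin.ext hc)
      rcases lt_or_gt_of_ne hne' with hlt | hgt
      · exact hkey _ _ hlt _ _ hxy
      · exact hkey _ _ hgt _ _ hxy.symm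
  · intro x
    have := ht2 (idx x) ⟨x, hmemidx x⟩
    exact (Finset.mem_sdiff.1 this).1

lemma pre_eq_unionList {L : List (Finset α)} (i : Fin L.length) :
    pre (fun j : Fin L.length => L.get j) i = unionList (L.take i.val) := by
  ext y
  simp only [pre, Finset.mem_biUnion, Finset.mem_filter, Finset.mem_univ, true_and,
    mem_unionList]
  constructor
  · rintro ⟨j, hj, hy⟩
    refine ⟨L.get j, ?_, hy⟩
    exact List.mem_take_iff_getElem.2 ⟨j.val, lt_min hj j.isLt, rfl⟩
  · rintro ⟨A, hA, hy⟩
    rw [List.mem_take_iff_getElem] at hA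
    obtain ⟨k, hk, rfl⟩ := hA
    have hk1 : k < i.val := lt_of_lt_of_le hk (min_le_left _ _)
    have hk2 : k < L.length := lt_of_lt_of_le hk (min_le_right _ _)
    exact ⟨⟨k, hk2⟩, hk1, hy⟩

lemma hall_partition [Fintype α] {F : α → Finset β} (hall : HallOn F Finset.univ) :
    ∃ (m : ℕ) (W : Fin m → Finset α), IsHallPartition F W := by
  obtain ⟨L, hL⟩ := exists_chain (Finset.univ.card) F Finset.univ le_rfl hall
  refine ⟨L.length, fun i => L.get i, ?_, ?_, ?_, ?_, ?_⟩
  · -- pairwise disjoint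
    have hpw := chain_pairwise L F Finset.univ hL
    rw [List.pairwise_iff_get] at hpw
    intro i j hij
    rcases lt_trichotomy i j with h | h | h
    · exact hpw i j h
    · exact absurd h hij
    · exact (hpw j i h).symm
  · -- union is univ
    apply Finset.eq_univ_iff_forall.2
    intro y
    have hy : y ∈ unionList L := (chain_union L F Finset.univ hL) ▸ Finset.mem_univ y
    obtain ⟨A, hA, hyA⟩ := mem_unionList.1 hy
    obtain ⟨n, rfl⟩ := List.mem_iff_get.1 hA
    exact Finset.mem_biUnion.2 ⟨n, Finset.mem_univ n, hyA⟩
  · intro i x hx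
    have := (chain_main L F Finset.univ hL i.val i.isLt).2.1 x hx
    rwa [pre_eq_unionList]
  · intro i
    have := (chain_main L F Finset.univ hL i.val i.isLt).1
    rwa [pre_eq_unionList]
  · intro i hi
    have := (chain_main L F Finset.univ hL i.val i.isLt).2.2 hi
    rwa [pre_eq_unionList]

end Defs

theorem stmt12 [Fintype α] [Nonempty α] [DecidableEq α] [Fintype β] [Nonempty β] [DecidableEq β] (F : α → Finset β) :
    (HallOn F Finset.univ ↔ ∃ (m : ℕ) (W : Fin m → Finset α), IsHallPartition F W) ∧
    (HallOn F Finset.univ ↔ ∃ s : α → β, Function.Injective s ∧ ∀ x, s x ∈ F x) := by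
  constructor
  · constructor
    · exact hall_partition
    · rintro ⟨m, W, hp⟩
      obtain ⟨s, hs1, hs2⟩ := partition_selection hp
      exact selection_hall hs1 hs2
  · constructor
    · intro hall
      exact (Finset.all_card_le_biUnion_card_iff_exists_injective F).1
        (fun W => hall W (Finset.subset_univ W))
    · rintro ⟨s, hs1, hs2⟩
      exact selection_hall hs1 hs2
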